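/- arXiv:1402.6302 — 3 statements merged into one kernel-verified Lean document; each statement's English description precedes it below -/
import Mathlib

section
/- For every α ∈ (0,1), the identity 2α ∫₀^{1/2} u^{-α}(1-u)^{-(α+1)} du = 2^{2α} − Γ(1-α)²/Γ(1-2α) holds, where Γ is the Euler Gamma function. -/
/-!
Put `F u = u ^ (1 - α) * (1 - u) ^ (-α)`. Then
`F' u = (1 - 2α) u^{-α} (1 - u)^{-α} + α u^{-α} (1 - u)^{-(α+1)}`, and integrating over `[0, 1/2]`
gives `F (1/2) = 2^{2α-1}`. The first integrand is invariant under `u ↦ 1 - u`, so its integral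
over `[0, 1/2]` is half the Beta integral `B(1-α, 1-α) = Γ(1-α)² / Γ(2-2α)`, and
`(1 - 2α) / Γ(2 - 2α) = 1 / Γ(1 - 2α)`.
-/

open Real Set intervalIntegral MeasureTheory

-- Also true at `s = 0` and at the poles, where Mathlib's `Gamma` takes the value `0`.
theorem Real.one_div_Gamma_eq_self_mul_one_div_Gamma_add_one (s : ℝ) :
    (Gamma s)⁻¹ = s * (Gamma (s + 1))⁻¹ := by
  rcases ne_or_eq s 0 with hs | rfl
  · rw [Gamma_add_one hs, mul_inv, mul_inv_cancel_left₀ hs]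
  · rw [zero_add, Gamma_zero, inv_zero, zero_mul]

theorem integral_rpow_mul_one_sub_rpow_eq_Gamma {a b : ℝ} (ha : 0 < a) (hb : 0 < b) :
    ∫ x in (0:ℝ)..1, x ^ (a - 1) * (1 - x) ^ (b - 1) = Gamma a * Gamma b / Gamma (a + b) := by
  have hcast : Complex.betaIntegral a b =
      ((∫ x in (0:ℝ)..1, x ^ (a - 1) * (1 - x) ^ (b - 1) : ℝ) : ℂ) := by
    rw [Complex.betaIntegral, ← intervalIntegral.integral_ofReal]
    refine intervalIntegral.integral_congr fun x hx => ?_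
    rw [uIcc_of_le zero_le_one] at hx
    push_cast [Complex.ofReal_cpow hx.1, Complex.ofReal_cpow (sub_nonneg.2 hx.2)]
    rfl
  have := Complex.betaIntegral_eq_Gamma_mul_div (a : ℂ) b (by simpa) (by simpa)
  rw [hcast, ← Complex.ofReal_add] at this
  simp only [Complex.Gamma_ofReal] at this
  exact_mod_cast this

theorem intervalIntegrable_rpow_mul_one_sub_rpow {a : ℝ} (ha : -1 < a) (b : ℝ) {c : ℝ}
    (hc0 : 0 ≤ c) (hc1 : c < 1) :
    IntervalIntegrable (fun u => u ^ a * (1 - u) ^ b) volume 0 c := by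
  refine (intervalIntegrable_rpow' ha).mul_continuousOn (ContinuousOn.rpow_const (by fun_prop) ?_)
  intro x hx
  rw [uIcc_of_le hc0] at hx
  exact Or.inl (by linarith [hx.2])

theorem hasDerivAt_rpow_mul_one_sub_rpow (a b : ℝ) {x : ℝ} (hx0 : 0 < x) (hx1 : x < 1) :
    HasDerivAt (fun u => u ^ a * (1 - u) ^ b)
      (a * x ^ (a - 1) * (1 - x) ^ b - b * x ^ a * (1 - x) ^ (b - 1)) x := by
  have h1 := Real.hasDerivAt_rpow_const (p := a) (Or.inl hx0.ne')
  have h2 : HasDerivAt (fun u => (1 - u) ^ b) (b * (1 - x) ^ (b - 1) * -1) x :=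
    (Real.hasDerivAt_rpow_const (Or.inl (by linarith))).comp x ((hasDerivAt_id x).const_sub 1)
  exact (h1.mul h2).congr_deriv (by ring)

theorem integral_zero_one_eq_two_mul_integral_zero_half {f : ℝ → ℝ}
    (hf : IntervalIntegrable f volume 0 (1 / 2)) (hsymm : ∀ x, f (1 - x) = f x) :
    ∫ x in (0:ℝ)..1, f x = 2 * ∫ x in (0:ℝ)..(1 / 2), f x := by
  have hreflect : ∫ x in (1 / 2 : ℝ)..1, f x = ∫ x in (0:ℝ)..(1 / 2), f x := by
    have := (intervalIntegral.integral_comp_sub_left f (a := 0) (b := 1 / 2) 1).symm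
    norm_num [hsymm] at this
    exact this
  have hf' : IntervalIntegrable f volume (1 / 2) 1 := by
    have := (hf.comp_sub_left 1).symm
    norm_num [hsymm] at this
    exact this
  rw [← integral_add_adjacent_intervals hf hf', hreflect, two_mul]

theorem hasDerivAt_rpow_one_sub_mul_one_sub_rpow_neg (α : ℝ) {x : ℝ} (hx0 : 0 < x) (hx1 : x < 1) :
    HasDerivAt (fun u => u ^ (1 - α) * (1 - u) ^ (-α))
      ((1 - 2 * α) * (x ^ (-α) * (1 - x) ^ (-α)) + α * (x ^ (-α) * (1 - x) ^ (-(α + 1)))) x := by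
  have hx : x ^ (1 - α) = x * x ^ (-α) := by
    rw [sub_eq_add_neg, rpow_add hx0, rpow_one]
  have hx' : (1 - x) ^ (-α) = (1 - x) * (1 - x) ^ (-(α + 1)) := by
    rw [show -α = 1 + -(α + 1) by ring, rpow_add (by linarith), rpow_one]
  refine (hasDerivAt_rpow_mul_one_sub_rpow (1 - α) (-α) hx0 hx1).congr_deriv ?_
  rw [show 1 - α - 1 = -α by ring, show -α - 1 = -(α + 1) by ring, hx]
  linear_combination α * x ^ (-α) * hx'

theorem integral_rpow_neg_mul_one_sub_rpow_neg_combination {α c : ℝ} (hα : α < 1) (hc0 : 0 ≤ c)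
    (hc1 : c < 1) :
    (1 - 2 * α) * (∫ x in (0:ℝ)..c, x ^ (-α) * (1 - x) ^ (-α)) +
        α * ∫ x in (0:ℝ)..c, x ^ (-α) * (1 - x) ^ (-(α + 1)) =
      c ^ (1 - α) * (1 - c) ^ (-α) := by
  have hI := intervalIntegrable_rpow_mul_one_sub_rpow (a := -α) (by linarith) (-α) hc0 hc1
  have hI' := intervalIntegrable_rpow_mul_one_sub_rpow (a := -α) (by linarith) (-(α + 1)) hc0 hc1
  have hcont : ContinuousOn (fun u => u ^ (1 - α) * (1 - u) ^ (-α)) (Icc 0 c) := by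
    refine ContinuousOn.mul (fun x _ => ?_) (ContinuousOn.rpow_const (by fun_prop) fun x hx => ?_)
    · exact (continuousAt_rpow_const x _ (Or.inr (by linarith))).continuousWithinAt
    · exact Or.inl (by linarith [hx.2])
  have hFTC := integral_eq_sub_of_hasDerivAt_of_le hc0 hcont
    (fun x hx => hasDerivAt_rpow_one_sub_mul_one_sub_rpow_neg α hx.1 (hx.2.trans hc1))
    ((hI.const_mul _).add (hI'.const_mul _))
  rw [integral_add (hI.const_mul _) (hI'.const_mul _), intervalIntegral.integral_const_mul,
    intervalIntegral.integral_const_mul, zero_rpow (by linarith), zero_mul, sub_zero] at hFTC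
  exact hFTC

theorem Gamma_one_sub_sq_div_Gamma_one_sub_two_mul {α : ℝ} (hα : α < 1) :
    Gamma (1 - α) ^ 2 / Gamma (1 - 2 * α) =
      2 * ((1 - 2 * α) * ∫ x in (0:ℝ)..(1 / 2), x ^ (-α) * (1 - x) ^ (-α)) := by
  have hbeta := integral_rpow_mul_one_sub_rpow_eq_Gamma (a := 1 - α) (b := 1 - α)
    (by linarith) (by linarith)
  rw [show 1 - α - 1 = -α by ring, show 1 - α + (1 - α) = 1 - 2 * α + 1 by ring] at hbeta
  have hhalf := integral_zero_one_eq_two_mul_integral_zero_half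
    (intervalIntegrable_rpow_mul_one_sub_rpow (a := -α) (by linarith) (-α) (by norm_num)
      (by norm_num))
    (fun x => by rw [sub_sub_cancel, mul_comm])
  rw [div_eq_mul_inv, one_div_Gamma_eq_self_mul_one_div_Gamma_add_one]
  linear_combination (2 * α - 1) * (hhalf.symm.trans hbeta)

/-- For every `α ∈ (0,1)`,
`2α ∫₀^{1/2} u^{-α}(1-u)^{-(α+1)} du = 2^{2α} − Γ(1-α)²/Γ(1-2α)`. -/
theorem stmt0 (α : ℝ) (hα : α ∈ Set.Ioo (0:ℝ) 1) :
    2 * α * ∫ u in Set.Ioo (0:ℝ) (1/2), u ^ (-α) * (1 - u) ^ (-(α + 1)) =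
      2 ^ (2 * α) - (Real.Gamma (1 - α)) ^ 2 / Real.Gamma (1 - 2 * α) := by
  have hcomb := integral_rpow_neg_mul_one_sub_rpow_neg_combination (c := 1 / 2) hα.2
    (by norm_num) (by norm_num)
  have hhalf : (1 / 2 : ℝ) ^ (1 - α) * (1 - 1 / 2) ^ (-α) = 2 ^ (2 * α) / 2 := by
    rw [show (1 - 1 / 2 : ℝ) = 1 / 2 by norm_num, ← rpow_add (by norm_num), one_div,
      inv_rpow (by norm_num), ← rpow_neg (by norm_num), show -(1 - α + -α) = 2 * α - 1 by ring,
      rpow_sub (by norm_num), rpow_one]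
  rw [← integral_Ioc_eq_integral_Ioo, ← intervalIntegral.integral_of_le (by norm_num),
    Gamma_one_sub_sq_div_Gamma_one_sub_two_mul hα.2]
  linear_combination 2 * hcomb + 2 * hhalf
end

section
/- Let F be a distribution function on (0,∞) whose survival function 1−F is regularly varying at infinity with index −α for some α > 0, and let X₁,…,Xₙ (n ≥ 2) be i.i.d. with distribution F. Let c = (1, c₂, …, cₙ) with c₂ > 0 and cᵢ ≥ 0 for i ≥ 3, and set Sₙ(c) = c₁X_{n,n} + ⋯ + cₙX_{1,n} where X_{1,n} ≤ ⋯ ≤ X_{n,n} are the order statistics, and c̃ = c₂/(1+c₂). Then P(Sₙ(c) > x, X_{n,n} ≤ x − c̃x) = o((1−F(x))²) as x → ∞. -/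
/-!
On the event, every observation is at most `b x` with `b = 1/(1+c₂)`, because `x - c̃x = b x`.
If at most two observations exceed `ε x`, then `Sₙ(c) ≤ b x + c₂ X_{n-1,n} + (∑ cᵢ) ε x`, so
`Sₙ(c) > x` forces two observations into `(a x, b x]` with `a = b - (∑ cᵢ) ε / c₂`. By independence
and a union bound over pairs and triples, the probability is at most
`C(n,2) (F(bx) - F(ax))² + C(n,3) (1 - F(εx))³`. Regular variation makes the first term
`≈ C(n,2) (a^{-α} - b^{-α})² (1 - F(x))²`, which is small once `a` is close to `b`, and the second
`o((1 - F(x))²)` since `1 - F(εx) → 0`.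
-/

open Filter MeasureTheory ProbabilityTheory Real Set

/-- The `L`-statistics `Sₙ(c) = c₁ X_{n,n} + c₂ X_{n-1,n} + ⋯ + cₙ X_{1,n}`:
`c i` multiplies the `(i+1)`-th largest value among `Y 0, …, Y (n-1)`. -/
noncomputable def Lstat {n : ℕ} (c : Fin n → ℝ) (Y : Fin n → ℝ) : ℝ :=
  ∑ i : Fin n, c i * (Y ∘ Tuple.sort Y) i.rev

open scoped ENNReal Topology

section OrderStatistics

variable {n : ℕ}

lemma exists_card_eq_forall_lt_of_lt_sort_rev {α : Type*} [LinearOrder α] (Y : Fin n → α)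
    (k : Fin n) {t : α} (ht : t < Y (Tuple.sort Y k.rev)) :
    ∃ T : Finset (Fin n), T.card = (k : ℕ) + 1 ∧ ∀ i ∈ T, t < Y i := by
  let e : Fin n ↪ Fin n := ⟨fun j => Tuple.sort Y j.rev,
    (Tuple.sort Y).injective.comp Fin.rev_injective⟩
  refine ⟨(Finset.Iic k).map e, by rw [Finset.card_map, Fin.card_Iic], ?_⟩
  simp only [Finset.mem_map, Finset.mem_Iic]
  rintro _ ⟨j, hjk, rfl⟩
  exact ht.trans_le (Tuple.monotone_sort Y (Fin.rev_le_rev.2 hjk))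

lemma sort_rev_le_of_not_exists_card_eq {α : Type*} [LinearOrder α] (Y : Fin n → α) {t : α}
    {k : ℕ} (h : ¬ ∃ T : Finset (Fin n), T.card = k ∧ ∀ i ∈ T, t < Y i) (i : Fin n)
    (hi : k ≤ i + 1) : Y (Tuple.sort Y i.rev) ≤ t := by
  by_contra! hlt
  obtain ⟨T, hT, hTt⟩ := exists_card_eq_forall_lt_of_lt_sort_rev Y i hlt
  obtain ⟨T', hT'T, hT'⟩ := Finset.exists_subset_card_eq (hT ▸ hi)
  exact h ⟨T', hT', fun j hj => hTt j (hT'T hj)⟩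

lemma Lstat_le_of_tail_le {m : ℕ} {c Y : Fin (m + 2) → ℝ} (hc : ∀ i, 0 ≤ c i) {M t : ℝ} (ht : 0 ≤ t)
    (hM : ∀ i, Y i ≤ M) (htail : ∀ i : Fin (m + 2), 2 ≤ (i : ℕ) → Y (Tuple.sort Y i.rev) ≤ t) :
    Lstat c Y ≤ c 0 * M + c 1 * Y (Tuple.sort Y (Fin.rev 1)) + (∑ i, c i) * t := by
  have htail_sum : ∑ i : Fin m, c i.succ.succ * Y (Tuple.sort Y i.succ.succ.rev) ≤
      (∑ i : Fin m, c i.succ.succ) * t := by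
    rw [Finset.sum_mul]
    exact Finset.sum_le_sum fun i _ =>
      mul_le_mul_of_nonneg_left (htail _ (by simp)) (hc _)
  simp only [Lstat, Function.comp_apply, Fin.sum_univ_succ (n := m + 1),
    Fin.sum_univ_succ (n := m), Fin.succ_zero_eq_one] at htail_sum ⊢
  nlinarith [hc 0, hc 1, mul_le_mul_of_nonneg_left (hM (Tuple.sort Y (Fin.rev 0))) (hc 0)]

lemma exists_pair_or_triple_of_lt_Lstat {m : ℕ} {c Y : Fin (m + 2) → ℝ} (hc : ∀ i, 0 ≤ c i)
    {M s t x : ℝ} (ht : 0 ≤ t) (hM : ∀ i, Y i ≤ M)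
    (hx : c 0 * M + c 1 * s + (∑ i, c i) * t ≤ x) (hL : x < Lstat c Y) :
    (∃ T : Finset (Fin (m + 2)), T.card = 2 ∧ ∀ i ∈ T, s < Y i) ∨
      ∃ T : Finset (Fin (m + 2)), T.card = 3 ∧ ∀ i ∈ T, t < Y i := by
  by_cases h3 : ∃ T : Finset (Fin (m + 2)), T.card = 3 ∧ ∀ i ∈ T, t < Y i
  · exact Or.inr h3
  have hLle := Lstat_le_of_tail_le hc ht hM fun i hi =>
    sort_rev_le_of_not_exists_card_eq Y h3 i (by omega)
  have hs : c 1 * s < c 1 * Y (Tuple.sort Y (Fin.rev 1)) := by linarith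
  simpa using Or.inl (exists_card_eq_forall_lt_of_lt_sort_rev Y 1 (lt_of_mul_lt_mul_left hs (hc 1)))

end OrderStatistics

lemma measure_exists_card_eq_forall_mem_le {Ω ι β : Type*} [MeasurableSpace Ω]
    [MeasurableSpace β] [Fintype ι] {μ : Measure Ω} {X : ι → Ω → β} (hX : iIndepFun X μ)
    {S : Set β} (hS : MeasurableSet S) {p : ℝ≥0∞} (hp : ∀ i, μ (X i ⁻¹' S) ≤ p) (k : ℕ) :
    μ {ω | ∃ T : Finset ι, T.card = k ∧ ∀ i ∈ T, X i ω ∈ S} ≤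
      (Fintype.card ι).choose k * p ^ k := by
  have hsub : {ω | ∃ T : Finset ι, T.card = k ∧ ∀ i ∈ T, X i ω ∈ S} ⊆
      ⋃ T ∈ Finset.univ.powersetCard k, ⋂ i ∈ T, X i ⁻¹' S := by
    rintro ω ⟨T, hT, hTS⟩
    simpa using ⟨T, hT, hTS⟩
  calc μ _ ≤ μ (⋃ T ∈ Finset.univ.powersetCard k, ⋂ i ∈ T, X i ⁻¹' S) := measure_mono hsub
    _ ≤ ∑ T ∈ Finset.univ.powersetCard k, μ (⋂ i ∈ T, X i ⁻¹' S) :=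
      measure_biUnion_finset_le _ _
    _ ≤ ∑ T ∈ Finset.univ.powersetCard k, p ^ k := by
      refine Finset.sum_le_sum fun T hT => ?_
      rw [hX.measure_inter_preimage_eq_mul T fun _ _ => hS, ← (Finset.mem_powersetCard.1 hT).2]
      exact Finset.prod_le_pow_card _ _ _ fun i _ => hp i
    _ = (Fintype.card ι).choose k * p ^ k := by
      rw [Finset.sum_const, Finset.card_powersetCard, Finset.card_univ, nsmul_eq_mul]

section DistributionFunction

variable {Ω : Type*} [MeasurableSpace Ω] {μ : Measure Ω} [IsProbabilityMeasure μ] {Y : Ω → ℝ}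
  {F : ℝ → ℝ}

lemma cdf_map_eq (hY : Measurable Y) (hF : ∀ x, (μ {ω | Y ω ≤ x}).toReal = F x) :
    cdf (μ.map Y) = F := by
  have := Measure.isProbabilityMeasure_map (μ := μ) hY.aemeasurable
  ext x
  rw [cdf_eq_real, measureReal_def, Measure.map_apply hY measurableSet_Iic]
  exact hF x

lemma tendsto_one_sub_atTop_of_cdf (hY : Measurable Y)
    (hF : ∀ x, (μ {ω | Y ω ≤ x}).toReal = F x) : Tendsto (fun t => 1 - F t) atTop (𝓝 0) := by
  rw [← cdf_map_eq hY hF, ← sub_self 1]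
  exact (tendsto_cdf_atTop _).const_sub 1

lemma measure_preimage_Ioc_eq_of_cdf (hY : Measurable Y)
    (hF : ∀ x, (μ {ω | Y ω ≤ x}).toReal = F x) (u v : ℝ) :
    μ (Y ⁻¹' Ioc u v) = ENNReal.ofReal (F v - F u) := by
  have := Measure.isProbabilityMeasure_map (μ := μ) hY.aemeasurable
  rw [← Measure.map_apply hY measurableSet_Ioc, ← measure_cdf (μ.map Y),
    StieltjesFunction.measure_Ioc, cdf_map_eq hY hF]

lemma measure_preimage_Ioi_eq_of_cdf (hY : Measurable Y)
    (hF : ∀ x, (μ {ω | Y ω ≤ x}).toReal = F x) (t : ℝ) :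
    μ (Y ⁻¹' Ioi t) = ENNReal.ofReal (1 - F t) := by
  have := Measure.isProbabilityMeasure_map (μ := μ) hY.aemeasurable
  rw [← Measure.map_apply hY measurableSet_Ioi, ← measure_cdf (μ.map Y),
    StieltjesFunction.measure_Ioi _ (tendsto_cdf_atTop _), cdf_map_eq hY hF]

end DistributionFunction

def IsRegularlyVarying (g : ℝ → ℝ) (ρ : ℝ) : Prop :=
  ∀ y > (0 : ℝ), Tendsto (fun t => g (t * y) / g t) atTop (𝓝 (y ^ ρ))

namespace IsRegularlyVarying

variable {g : ℝ → ℝ} {ρ : ℝ}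

lemma eventually_ne_zero (hg : IsRegularlyVarying g ρ) : ∀ᶠ t in atTop, g t ≠ 0 := by
  filter_upwards [(hg 1 one_pos).eventually_ne (by simp : (1 : ℝ) ^ ρ ≠ 0)] with t ht h0
  simp [h0] at ht

lemma eventually_le_mul_sq (hg : IsRegularlyVarying g ρ) (hg0 : Tendsto g atTop (𝓝 0))
    {a b ε C₂ C₃ δ : ℝ} (ha : 0 < a) (hb : 0 < b) (hε : 0 < ε)
    (hδ : C₂ * (a ^ ρ - b ^ ρ) ^ 2 < δ) :
    ∀ᶠ x in atTop, C₂ * (g (x * a) - g (x * b)) ^ 2 + C₃ * g (x * ε) ^ 3 ≤ δ * g x ^ 2 := by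
  have hgε : Tendsto (fun x => g (x * ε)) atTop (𝓝 0) :=
    hg0.comp (tendsto_id.atTop_mul_const hε)
  have hratio : Tendsto (fun x => C₂ * (g (x * a) / g x - g (x * b) / g x) ^ 2 +
      C₃ * (g (x * ε) / g x) ^ 2 * g (x * ε)) atTop
      (𝓝 (C₂ * (a ^ ρ - b ^ ρ) ^ 2 + C₃ * (ε ^ ρ) ^ 2 * 0)) :=
    (((hg a ha).sub (hg b hb)).pow 2).const_mul C₂ |>.add
      ((((hg ε hε).pow 2).const_mul C₃).mul hgε)
  rw [mul_zero, add_zero] at hratio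
  filter_upwards [hratio.eventually_lt_const hδ, hg.eventually_ne_zero] with x hx hgx
  calc C₂ * (g (x * a) - g (x * b)) ^ 2 + C₃ * g (x * ε) ^ 3
      = (C₂ * (g (x * a) / g x - g (x * b) / g x) ^ 2 +
          C₃ * (g (x * ε) / g x) ^ 2 * g (x * ε)) * g x ^ 2 := by
        field_simp
    _ ≤ δ * g x ^ 2 := by gcongr

end IsRegularlyVarying

lemma exists_rpow_sub_sq_lt {b ρ C δ : ℝ} (hb : 0 < b) (hδ : 0 < δ) :
    ∃ a ∈ Ioo 0 b, C * (a ^ ρ - b ^ ρ) ^ 2 < δ := by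
  have hlim : Tendsto (fun a => C * (a ^ ρ - b ^ ρ) ^ 2) (𝓝[<] b) (𝓝 0) := by
    have := (((continuousAt_rpow_const b ρ (Or.inl hb.ne')).tendsto.sub_const (b ^ ρ)).pow
      2).const_mul C
    simpa using this.mono_left nhdsWithin_le_nhds
  have hIoo : ∀ᶠ a in 𝓝[<] b, a ∈ Ioo 0 b := Ioo_mem_nhdsLT hb
  exact (hIoo.and (hlim.eventually (gt_mem_nhds hδ))).exists

lemma measure_Lstat_gt_and_iSup_le_le {Ω : Type*} [MeasurableSpace Ω] {μ : Measure Ω}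
    {m : ℕ} {X : Fin (m + 2) → Ω → ℝ} (hX : iIndepFun X μ) {c : Fin (m + 2) → ℝ}
    (hc : ∀ i, 0 ≤ c i) {M s t x : ℝ} (ht : 0 ≤ t)
    (hx : c 0 * M + c 1 * s + (∑ i, c i) * t ≤ x) {q r : ℝ≥0∞}
    (hq : ∀ i, μ (X i ⁻¹' Ioc s M) ≤ q) (hr : ∀ i, μ (X i ⁻¹' Ioi t) ≤ r) :
    μ {ω | Lstat c (fun i => X i ω) > x ∧ (⨆ i, X i ω) ≤ M} ≤
      (m + 2).choose 2 * q ^ 2 + (m + 2).choose 3 * r ^ 3 := by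
  have hsub : {ω | Lstat c (fun i => X i ω) > x ∧ (⨆ i, X i ω) ≤ M} ⊆
      {ω | ∃ T : Finset (Fin (m + 2)), T.card = 2 ∧ ∀ i ∈ T, X i ω ∈ Ioc s M} ∪
        {ω | ∃ T : Finset (Fin (m + 2)), T.card = 3 ∧ ∀ i ∈ T, X i ω ∈ Ioi t} := by
    rintro ω ⟨hL, hsup⟩
    have hM : ∀ i, X i ω ≤ M := (ciSup_le_iff (Set.finite_range _).bddAbove).1 hsup
    rcases exists_pair_or_triple_of_lt_Lstat hc ht hM hx hL with ⟨T, hT, hTs⟩ | htriple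
    · exact Or.inl ⟨T, hT, fun i hi => ⟨hTs i hi, hM i⟩⟩
    · exact Or.inr htriple
  have hpair := measure_exists_card_eq_forall_mem_le hX measurableSet_Ioc hq 2
  have htriple := measure_exists_card_eq_forall_mem_le hX measurableSet_Ioi hr 3
  rw [Fintype.card_fin] at hpair htriple
  exact (measure_mono hsub).trans ((measure_union_le _ _).trans (add_le_add hpair htriple))

lemma toReal_measure_Lstat_gt_and_iSup_le_le_of_cdf {Ω : Type*} [MeasurableSpace Ω]
    {μ : Measure Ω} [IsProbabilityMeasure μ] {m : ℕ} {X : Fin (m + 2) → Ω → ℝ}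
    (hX : iIndepFun X μ) (hmeas : ∀ i, Measurable (X i)) {F : ℝ → ℝ}
    (hF : ∀ i x, (μ {ω | X i ω ≤ x}).toReal = F x) {c : Fin (m + 2) → ℝ} (hc : ∀ i, 0 ≤ c i)
    {u v t x : ℝ} (ht : 0 ≤ t) (huv : u ≤ v) (hx : c 0 * v + c 1 * u + (∑ i, c i) * t ≤ x) :
    (μ {ω | Lstat c (fun i => X i ω) > x ∧ (⨆ i, X i ω) ≤ v}).toReal ≤
      (m + 2).choose 2 * (F v - F u) ^ 2 + (m + 2).choose 3 * (1 - F t) ^ 3 := by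
  have hcdf : cdf (μ.map (X 0)) = F := cdf_map_eq (hmeas 0) (hF 0)
  have hq0 : 0 ≤ F v - F u := sub_nonneg.2 (hcdf ▸ monotone_cdf _ huv)
  have hr0 : 0 ≤ 1 - F t := sub_nonneg.2 (hcdf ▸ cdf_le_one _ _)
  refine ENNReal.toReal_le_of_le_ofReal (by positivity) ?_
  rw [ENNReal.ofReal_add (by positivity) (by positivity), ENNReal.ofReal_mul (by positivity),
    ENNReal.ofReal_mul (by positivity), ENNReal.ofReal_pow hq0, ENNReal.ofReal_pow hr0,
    ENNReal.ofReal_natCast, ENNReal.ofReal_natCast]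
  exact measure_Lstat_gt_and_iSup_le_le hX hc ht hx
    (fun i => (measure_preimage_Ioc_eq_of_cdf (hmeas i) (hF i) _ _).le)
    (fun i => (measure_preimage_Ioi_eq_of_cdf (hmeas i) (hF i) _).le)

/-- If `X₁, …, Xₙ` (`n ≥ 2`) are i.i.d. positive random variables with common distribution
function `F` whose survival function `1 - F` is regularly varying at infinity with index `-α`
(`α > 0`), and `c = (1, c₂, …, cₙ)` with `c₂ > 0`, `cᵢ ≥ 0`, `c̃ = c₂/(1+c₂)`, then
`P(Sₙ(c) > x, X_{n,n} ≤ x − c̃x) = o((1−F(x))²)` as `x → ∞`. -/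
theorem stmt2 {Ω : Type*} [MeasureSpace Ω] [IsProbabilityMeasure (ℙ : Measure Ω)]
    (n : ℕ) (hn : 2 ≤ n) (α : ℝ) (F : ℝ → ℝ)
    (X : Fin n → Ω → ℝ) (hmeas : ∀ i, Measurable (X i))
    (hindep : iIndepFun X ℙ)
    (hdf : ∀ i x, (ℙ {ω | X i ω ≤ x}).toReal = F x)
    (hRV : ∀ y > (0:ℝ),
      Tendsto (fun t => (1 - F (t * y)) / (1 - F t)) atTop (nhds (y ^ (-α))))
    (c : Fin n → ℝ) (hc0 : c ⟨0, by omega⟩ = 1) (hc1 : 0 < c ⟨1, by omega⟩)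
    (hcnn : ∀ i, 0 ≤ c i) :
    (fun x => (ℙ {ω | Lstat c (fun i => X i ω) > x ∧
        (⨆ i, X i ω) ≤ x - (c ⟨1, by omega⟩ / (1 + c ⟨1, by omega⟩)) * x}).toReal)
      =o[atTop] fun x => (1 - F x) ^ 2 := by
  obtain ⟨m, rfl⟩ : ∃ m, n = m + 2 := ⟨n - 2, by omega⟩
  simp only [Fin.mk_one, Fin.zero_eta] at hc0 hc1 ⊢
  have hK : 0 < ∑ i, c i := by
    linarith [Finset.single_le_sum (fun i _ => hcnn i) (Finset.mem_univ 0)]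
  have hg : IsRegularlyVarying (fun t => 1 - F t) (-α) := hRV
  set b := 1 / (1 + c 1) with hb_def
  have hb : 0 < b := by positivity
  rw [Asymptotics.isLittleO_iff]
  intro δ hδ
  obtain ⟨a, ⟨ha, hab⟩, hδa⟩ :=
    exists_rpow_sub_sq_lt (C := ((m + 2).choose 2 : ℝ)) (ρ := -α) hb hδ
  set ε := (b - a) * c 1 / ∑ i, c i with hε_def
  have hε : 0 < ε := div_pos (mul_pos (sub_pos.2 hab) hc1) hK
  filter_upwards [hg.eventually_le_mul_sq (C₃ := (m + 2).choose 3)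
    (tendsto_one_sub_atTop_of_cdf (hmeas 0) (hdf 0)) ha hb hε hδa,
    eventually_ge_atTop 0] with x hx hx0
  rw [Real.norm_of_nonneg ENNReal.toReal_nonneg, Real.norm_of_nonneg (sq_nonneg _),
    show x - c 1 / (1 + c 1) * x = x * b by rw [hb_def]; field_simp; ring]
  refine (toReal_measure_Lstat_gt_and_iSup_le_le_of_cdf (u := x * a) hindep hmeas hdf hcnn
    (mul_nonneg hx0 hε.le) (by gcongr) (le_of_eq ?_)).trans (le_of_eq_of_le (by ring) hx)
  -- `a`, `b`, `ε` are tuned so that `x b + c₂ x a + (∑ c) x ε = x` exactly.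
  rw [hc0, hε_def, hb_def]
  field_simp
  ring
end

section
/- Let F_n be a distribution function on [0,∞) whose survival function 1−F_n is regularly varying at infinity with index −α for some α ≥ 1, and fix c̃ ∈ (0,1). Define V_α(x) = ∫₀^{c̃x} ((1 − u/x)^{-α} − 1) dF_n(u) and μ(x) = x^{-1} ∫₀^{x} u dF_n(u). Then lim_{x→∞} V_α(x)/μ(x) = α. -/
/-!
For `0 ≤ w ≤ δ < 1` one has `α w ≤ (1 - w)^{-α} - 1 ≤ α (1 - δ)^{-α-1} w`. Integrating over
`[0, c̃x]` and splitting at `δx` gives, with `μ(x) = x⁻¹ ∫₀ˣ u dF`,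
`α μ(x) - α (1 - F(c̃x)) ≤ V_α(x) ≤ α (1 - δ)^{-α-1} μ(x) + α (1 - c̃)^{-α-1} (1 - F(δx))`.
Bounding `∫₀ˣ u dF` below by the dyadic sums `∑_{k<n} 2^{-k-1} x (F(2^{-k} x) - F(2^{-k-1} x))` and
passing to the limit termwise by regular variation, `μ(x) / (1 - F(x))` eventually exceeds `n/2`
for every `n` (this is where `α ≥ 1` enters). Hence `(1 - F(δx)) / μ(x) → 0` for every `δ > 0`, so
`V_α / μ` is eventually squeezed between `α - ε` and `α (1 - δ)^{-α-1} + ε`; let `δ → 0`.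
-/

open Filter MeasureTheory Real Set Topology

lemma one_add_mul_le_one_sub_rpow_neg {α w : ℝ} (hα : 0 ≤ α) (hw1 : w < 1) :
    1 + α * w ≤ (1 - w) ^ (-α) := by
  have hlog : α * w ≤ -α * log (1 - w) := by
    nlinarith [log_le_sub_one_of_pos (sub_pos.2 hw1)]
  calc 1 + α * w ≤ -α * log (1 - w) + 1 := by linarith
    _ ≤ exp (-α * log (1 - w)) := add_one_le_exp _
    _ = (1 - w) ^ (-α) := by rw [rpow_def_of_pos (sub_pos.2 hw1), mul_comm]

lemma one_sub_rpow_neg_sub_one_le {α δ w : ℝ} (hα : 0 ≤ α) (hδ : δ < 1)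
    (hw : w ∈ Icc 0 δ) :
    (1 - w) ^ (-α) - 1 ≤ α * (1 - δ) ^ (-(α + 1)) * w := by
  have hderiv : ∀ t ∈ Icc 0 δ, HasDerivWithinAt (fun t : ℝ => (1 - t) ^ (-α))
      (α * (1 - t) ^ (-(α + 1))) (Icc 0 δ) t := by
    intro t ht
    have h := ((hasDerivAt_id' t).const_sub 1).rpow_const (p := -α)
      (Or.inl (sub_pos.2 (ht.2.trans_lt hδ)).ne')
    rw [show -1 * -α * (1 - t) ^ (-α - 1) = α * (1 - t) ^ (-(α + 1)) by ring_nf] at h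
    exact h.hasDerivWithinAt
  have hbound :
      ∀ t ∈ Ico 0 δ, ‖α * (1 - t) ^ (-(α + 1))‖ ≤ α * (1 - δ) ^ (-(α + 1)) := by
    intro t ht
    have h1t : 0 < 1 - t := by linarith [ht.2]
    rw [norm_of_nonneg (mul_nonneg hα (rpow_nonneg h1t.le _))]
    exact mul_le_mul_of_nonneg_left
      (rpow_le_rpow_of_nonpos (sub_pos.2 hδ) (by linarith [ht.2]) (by linarith)) hα
  have h := norm_image_sub_le_of_norm_deriv_le_segment' hderiv hbound w hw
  rw [sub_zero, sub_zero, one_rpow] at h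
  exact (le_abs_self _).trans h

lemma tendsto_of_squeeze_of_upper_family {ι β : Type*} [TopologicalSpace β] [LinearOrder β]
    [OrderTopology β] {l : Filter ι} {p : Filter β} [p.NeBot] {f lower : ι → β}
    {upper : β → ι → β} {K : β → β} {a : β} (hlower : Tendsto lower l (𝓝 a))
    (hlower_le : ∀ᶠ x in l, lower x ≤ f x) (hK : Tendsto K p (𝓝 a))
    (hupper : ∀ᶠ δ in p, Tendsto (upper δ) l (𝓝 (K δ)) ∧ ∀ᶠ x in l, f x ≤ upper δ x) :
    Tendsto f l (𝓝 a) := by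
  refine tendsto_order.2 ⟨fun b hb => ?_, fun b hb => ?_⟩
  · filter_upwards [hlower.eventually (lt_mem_nhds hb), hlower_le] with x hbx hx
    exact hbx.trans_le hx
  · obtain ⟨δ, hKδ, hδ_lim, hδ_le⟩ := ((hK.eventually (gt_mem_nhds hb)).and hupper).exists
    filter_upwards [hδ_lim.eventually (gt_mem_nhds hKδ), hδ_le] with x hxb hx
    exact hx.trans_lt hxb

lemma setIntegral_Icc_eq_add_Ioc {μ : Measure ℝ} {f : ℝ → ℝ} {a b c : ℝ} (hab : a ≤ b)
    (hbc : b ≤ c) (hf : IntegrableOn f (Icc a c) μ) :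
    ∫ u in Icc a c, f u ∂μ = ∫ u in Icc a b, f u ∂μ + ∫ u in Ioc b c, f u ∂μ := by
  rw [← setIntegral_union (disjoint_left.2 fun u hu hu' => hu'.1.not_ge hu.2) measurableSet_Ioc
    (hf.mono_set (Icc_subset_Icc le_rfl hbc))
    (hf.mono_set (Ioc_subset_Icc_self.trans (Icc_subset_Icc hab le_rfl))),
    Icc_union_Ioc_eq_Icc hab hbc]

lemma half_le_mul_rpow_neg_sub_rpow_neg {α y : ℝ} (hα : 1 ≤ α) (hy0 : 0 < y)
    (hy1 : y ≤ 1) :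
    1 / 2 ≤ y / 2 * ((y / 2) ^ (-α) - y ^ (-α)) := by
  have hz : 0 < y / 2 := by positivity
  have hmul : ∀ t : ℝ, 0 < t → t * t ^ (-α) = t ^ (1 - α) := fun t ht => by
    rw [sub_eq_add_neg, rpow_add ht, rpow_one]
  have hmono : y ^ (1 - α) ≤ (y / 2) ^ (1 - α) :=
    rpow_le_rpow_of_nonpos hz (by linarith) (by linarith)
  have hone : 1 ≤ (y / 2) ^ (1 - α) :=
    one_le_rpow_of_pos_of_le_one_of_nonpos hz (by linarith) (by linarith)
  have hsplit : y / 2 * ((y / 2) ^ (-α) - y ^ (-α)) = (y / 2) ^ (1 - α) - y ^ (1 - α) / 2 := by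
    rw [mul_sub, hmul _ hz, ← hmul _ hy0]
    ring
  linarith

namespace StieltjesFunction

variable (F : StieltjesFunction ℝ)

noncomputable def truncatedMean (x : ℝ) : ℝ := x⁻¹ * ∫ u in Icc 0 x, u ∂F.measure

lemma measureReal_Ioc {a b : ℝ} (hab : a ≤ b) : F.measure.real (Ioc a b) = F b - F a := by
  rw [measureReal_def, F.measure_Ioc, ENNReal.toReal_ofReal (sub_nonneg.2 (F.mono hab))]

lemma mul_sub_le_setIntegral_Ioc {a b : ℝ} (hab : a ≤ b) :
    a * (F b - F a) ≤ ∫ u in Ioc a b, u ∂F.measure := by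
  rw [← F.measureReal_Ioc hab]
  exact setIntegral_ge_of_const_le_real measurableSet_Ioc measure_Ioc_lt_top.ne
    (fun u hu => hu.1.le) continuous_id.integrableOn_Ioc

lemma setIntegral_Ioc_le_mul {a b : ℝ} (hab : a ≤ b) :
    ∫ u in Ioc a b, u ∂F.measure ≤ b * (F b - F a) := by
  rw [← F.measureReal_Ioc hab, mul_comm, ← smul_eq_mul, ← setIntegral_const]
  exact setIntegral_mono_on continuous_id.integrableOn_Ioc
    (integrableOn_const measure_Ioc_lt_top.ne) measurableSet_Ioc fun u hu => hu.2

lemma setIntegral_id_le_of_subset {s : Set ℝ} {x : ℝ} (hs : s ⊆ Icc 0 x) :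
    ∫ u in s, u ∂F.measure ≤ ∫ u in Icc 0 x, u ∂F.measure :=
  setIntegral_mono_set continuous_id.integrableOn_Icc
    (ae_restrict_of_forall_mem measurableSet_Icc fun _ hu => hu.1) (ae_of_all _ hs)

lemma sum_mul_sub_le_setIntegral_Ioc {a : ℕ → ℝ} (ha : Antitone a) (n : ℕ) :
    ∑ k ∈ Finset.range n, a (k + 1) * (F (a k) - F (a (k + 1)))
      ≤ ∫ u in Ioc (a n) (a 0), u ∂F.measure := by
  induction n with
  | zero => simp
  | succ n ih =>
    rw [Finset.sum_range_succ, ← Ioc_union_Ioc_eq_Ioc (ha n.le_succ) (ha n.zero_le),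
      setIntegral_union (Ioc_disjoint_Ioc_of_le le_rfl) measurableSet_Ioc
        continuous_id'.integrableOn_Ioc continuous_id'.integrableOn_Ioc]
    linarith [F.mul_sub_le_setIntegral_Ioc (ha n.le_succ)]

lemma lt_one_of_tendsto_tail_ratio (hle : ∀ x, F x ≤ 1) {y L : ℝ} (hL : L ≠ 0)
    (h : Tendsto (fun t => (1 - F (t * y)) / (1 - F t)) atTop (𝓝 L)) (x : ℝ) : F x < 1 := by
  by_contra! hx
  -- once `F t = 1` the ratio is `0 / 0 = 0`
  refine hL (tendsto_nhds_unique h (tendsto_const_nhds.congr' ?_))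
  filter_upwards [eventually_ge_atTop x] with t ht
  rw [le_antisymm (hle t) (hx.trans (F.mono ht)), sub_self, div_zero]

lemma sum_dyadic_tail_ratio_le {x : ℝ} (hx : 0 < x) (hFx : F x < 1) (n : ℕ) :
    ∑ k ∈ Finset.range n, (2⁻¹ : ℝ) ^ (k + 1) *
        ((1 - F (x * 2⁻¹ ^ (k + 1))) / (1 - F x) - (1 - F (x * 2⁻¹ ^ k)) / (1 - F x))
      ≤ F.truncatedMean x / (1 - F x) := by
  set a : ℕ → ℝ := fun k => x * 2⁻¹ ^ k
  have ha : Antitone a := fun i j hij =>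
    mul_le_mul_of_nonneg_left (pow_le_pow_of_le_one (by norm_num) (by norm_num) hij) hx.le
  have hsub : Ioc (a n) (a 0) ⊆ Icc 0 x := fun u hu =>
    ⟨(by positivity : 0 ≤ a n).trans hu.1.le, by simpa [a] using hu.2⟩
  calc _ = (∑ k ∈ Finset.range n, a (k + 1) * (F (a k) - F (a (k + 1)))) / (x * (1 - F x)) := by
        rw [Finset.sum_div]
        refine Finset.sum_congr rfl fun k _ => ?_
        simp only [a]
        field_simp
        ring
    _ ≤ (∫ u in Icc 0 x, u ∂F.measure) / (x * (1 - F x)) := by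
        gcongr
        exact (F.sum_mul_sub_le_setIntegral_Ioc ha n).trans (F.setIntegral_id_le_of_subset hsub)
    _ = F.truncatedMean x / (1 - F x) := by
        rw [truncatedMean]
        field_simp

lemma tendsto_truncatedMean_div_tail_atTop {α : ℝ} (hα : 1 ≤ α) (hlt : ∀ x, F x < 1)
    (hRV : ∀ y > 0, Tendsto (fun t => (1 - F (t * y)) / (1 - F t)) atTop (𝓝 (y ^ (-α)))) :
    Tendsto (fun x => F.truncatedMean x / (1 - F x)) atTop atTop := by
  refine tendsto_atTop.2 fun M => ?_
  obtain ⟨n, hn⟩ := exists_nat_ge (2 * (M + 1))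
  have hlim := tendsto_finsetSum (Finset.range n) fun k _ =>
    ((hRV ((2⁻¹ : ℝ) ^ (k + 1)) (by positivity)).sub
      (hRV (2⁻¹ ^ k) (by positivity))).const_mul ((2⁻¹ : ℝ) ^ (k + 1))
  have hM : M < ∑ k ∈ Finset.range n,
      (2⁻¹ : ℝ) ^ (k + 1) * ((2⁻¹ ^ (k + 1)) ^ (-α) - (2⁻¹ ^ k) ^ (-α)) :=
    calc M < (n : ℝ) / 2 := by linarith
      _ = ∑ _k ∈ Finset.range n, (1 : ℝ) / 2 := by simp [div_eq_mul_inv]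
      _ ≤ _ := Finset.sum_le_sum fun k _ => by
        rw [pow_succ, ← div_eq_mul_inv]
        exact half_le_mul_rpow_neg_sub_rpow_neg hα (by positivity)
          (pow_le_one₀ (by norm_num) (by norm_num))
  filter_upwards [hlim.eventually (eventually_gt_nhds hM), eventually_gt_atTop 0] with x hMx hx
  exact hMx.le.trans (F.sum_dyadic_tail_ratio_le hx (hlt x) n)

lemma tendsto_tail_div_truncatedMean {α : ℝ} (hα : 1 ≤ α) (hlt : ∀ x, F x < 1)
    (hRV : ∀ y > 0, Tendsto (fun t => (1 - F (t * y)) / (1 - F t)) atTop (𝓝 (y ^ (-α))))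
    {δ : ℝ} (hδ : 0 < δ) :
    Tendsto (fun x => (1 - F (δ * x)) / F.truncatedMean x) atTop (𝓝 0) := by
  have h := (hRV δ hδ).mul (F.tendsto_truncatedMean_div_tail_atTop hα hlt hRV).inv_tendsto_atTop
  rw [mul_zero] at h
  refine h.congr fun x => ?_
  rw [Pi.inv_apply, inv_div, div_mul_div_cancel₀ (sub_pos.2 (hlt x)).ne', mul_comm]

lemma eventually_truncatedMean_pos {α : ℝ} (hα : 1 ≤ α) (hlt : ∀ x, F x < 1)
    (hRV : ∀ y > 0, Tendsto (fun t => (1 - F (t * y)) / (1 - F t)) atTop (𝓝 (y ^ (-α)))) :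
    ∀ᶠ x in atTop, 0 < F.truncatedMean x := by
  filter_upwards [(F.tendsto_truncatedMean_div_tail_atTop hα hlt hRV).eventually_gt_atTop 0]
    with x hx
  exact (div_pos_iff_of_pos_right (sub_pos.2 (hlt x))).1 hx

lemma integrableOn_one_sub_div_rpow_sub_one {α x a b : ℝ} (hx : 0 < x) (hb : b < x) :
    IntegrableOn (fun u => (1 - u / x) ^ (-α) - 1) (Icc a b) F.measure :=
  ContinuousOn.integrableOn_Icc <|
    ((continuousOn_const.sub (continuousOn_id.div_const x)).rpow_const fun _ hu =>
      Or.inl (sub_pos.2 ((div_lt_one hx).2 (hu.2.trans_lt hb))).ne').sub continuousOn_const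

lemma sub_mul_div_truncatedMean_le_setIntegral_div {α c x : ℝ} (hα : 0 ≤ α) (hc0 : 0 ≤ c)
    (hc1 : c < 1) (hle : ∀ z, F z ≤ 1) (hx : 0 < x) (hμ : 0 < F.truncatedMean x) :
    α - α * ((1 - F (c * x)) / F.truncatedMean x)
      ≤ (∫ u in Icc 0 (c * x), ((1 - u / x) ^ (-α) - 1) ∂F.measure) / F.truncatedMean x := by
  rw [le_div_iff₀ hμ, sub_mul, mul_assoc, div_mul_cancel₀ _ hμ.ne']
  have hcx : c * x < x := mul_lt_of_lt_one_left hx hc1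
  have hupper : x⁻¹ * ∫ u in Ioc (c * x) x, u ∂F.measure ≤ 1 - F (c * x) := by
    rw [inv_mul_le_iff₀ hx]
    exact (F.setIntegral_Ioc_le_mul hcx.le).trans
      (mul_le_mul_of_nonneg_left (by linarith [hle x]) hx.le)
  calc α * F.truncatedMean x - α * (1 - F (c * x))
      ≤ α * x⁻¹ * ∫ u in Icc 0 (c * x), u ∂F.measure := by
        rw [truncatedMean, setIntegral_Icc_eq_add_Ioc (by positivity) hcx.le
          continuous_id'.integrableOn_Icc]
        linear_combination mul_le_mul_of_nonneg_left hupper hα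
    _ = ∫ u in Icc 0 (c * x), α * x⁻¹ * u ∂F.measure := (integral_const_mul _ _).symm
    _ ≤ ∫ u in Icc 0 (c * x), ((1 - u / x) ^ (-α) - 1) ∂F.measure := by
        refine setIntegral_mono_on (continuous_const.mul continuous_id').integrableOn_Icc
          (F.integrableOn_one_sub_div_rpow_sub_one hx hcx) measurableSet_Icc fun u hu => ?_
        have h := one_add_mul_le_one_sub_rpow_neg hα ((div_lt_one hx).2 (hu.2.trans_lt hcx))
        rw [mul_assoc, inv_mul_eq_div]
        linarith

lemma setIntegral_Icc_le_mul_truncatedMean {α δ x : ℝ} (hα : 0 ≤ α) (hδ1 : δ < 1)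
    (hx : 0 < x) :
    ∫ u in Icc 0 (δ * x), ((1 - u / x) ^ (-α) - 1) ∂F.measure
      ≤ α * (1 - δ) ^ (-(α + 1)) * F.truncatedMean x := by
  have hδx : δ * x < x := mul_lt_of_lt_one_left hx hδ1
  calc ∫ u in Icc 0 (δ * x), ((1 - u / x) ^ (-α) - 1) ∂F.measure
      ≤ ∫ u in Icc 0 (δ * x), α * (1 - δ) ^ (-(α + 1)) * x⁻¹ * u ∂F.measure := by
        refine setIntegral_mono_on (F.integrableOn_one_sub_div_rpow_sub_one hx hδx)
          (continuous_const.mul continuous_id').integrableOn_Icc measurableSet_Icc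
          fun u hu => ?_
        have hw : u / x ∈ Icc 0 δ :=
          ⟨div_nonneg hu.1 hx.le, (div_le_iff₀ hx).2 hu.2⟩
        rw [mul_assoc _ x⁻¹, inv_mul_eq_div]
        exact one_sub_rpow_neg_sub_one_le hα hδ1 hw
    _ = α * (1 - δ) ^ (-(α + 1)) * x⁻¹ * ∫ u in Icc 0 (δ * x), u ∂F.measure :=
        integral_const_mul _ _
    _ ≤ α * (1 - δ) ^ (-(α + 1)) * F.truncatedMean x := by
        rw [truncatedMean, ← mul_assoc]
        exact mul_le_mul_of_nonneg_left
          (F.setIntegral_id_le_of_subset (Icc_subset_Icc le_rfl hδx.le))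
          (mul_nonneg (mul_nonneg hα (rpow_nonneg (by linarith) _)) (inv_nonneg.2 hx.le))

lemma setIntegral_Ioc_le_mul_tail {α a c x : ℝ} (hα : 0 ≤ α) (hc1 : c < 1)
    (hle : ∀ z, F z ≤ 1) (hx : 0 < x) (ha : 0 ≤ a) (hac : a ≤ c * x) :
    ∫ u in Ioc a (c * x), ((1 - u / x) ^ (-α) - 1) ∂F.measure
      ≤ α * (1 - c) ^ (-(α + 1)) * (1 - F a) := by
  have hK : 0 ≤ α * (1 - c) ^ (-(α + 1)) := mul_nonneg hα (rpow_nonneg (by linarith) _)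
  calc ∫ u in Ioc a (c * x), ((1 - u / x) ^ (-α) - 1) ∂F.measure
      ≤ ∫ _ in Ioc a (c * x), α * (1 - c) ^ (-(α + 1)) ∂F.measure := by
        refine setIntegral_mono_on
          ((F.integrableOn_one_sub_div_rpow_sub_one hx (mul_lt_of_lt_one_left hx hc1)).mono_set
            Ioc_subset_Icc_self)
          (integrableOn_const measure_Ioc_lt_top.ne) measurableSet_Ioc fun u hu => ?_
        have hw : u / x ∈ Icc 0 c :=
          ⟨div_nonneg (ha.trans hu.1.le) hx.le, (div_le_iff₀ hx).2 hu.2⟩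
        calc (1 - u / x) ^ (-α) - 1 ≤ α * (1 - c) ^ (-(α + 1)) * (u / x) :=
              one_sub_rpow_neg_sub_one_le hα hc1 hw
          _ ≤ α * (1 - c) ^ (-(α + 1)) :=
              mul_le_of_le_one_right hK (hw.2.trans hc1.le)
    _ = (F (c * x) - F a) * (α * (1 - c) ^ (-(α + 1))) := by
        rw [setIntegral_const, F.measureReal_Ioc hac, smul_eq_mul]
    _ ≤ α * (1 - c) ^ (-(α + 1)) * (1 - F a) := by
        rw [mul_comm]
        exact mul_le_mul_of_nonneg_left (by linarith [hle (c * x)]) hK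

lemma setIntegral_div_truncatedMean_le_add {α c δ x : ℝ} (hα : 0 ≤ α) (hδ0 : 0 ≤ δ)
    (hδc : δ ≤ c) (hc1 : c < 1) (hle : ∀ z, F z ≤ 1) (hx : 0 < x)
    (hμ : 0 < F.truncatedMean x) :
    (∫ u in Icc 0 (c * x), ((1 - u / x) ^ (-α) - 1) ∂F.measure) / F.truncatedMean x
      ≤ α * (1 - δ) ^ (-(α + 1))
        + α * (1 - c) ^ (-(α + 1)) * ((1 - F (δ * x)) / F.truncatedMean x) := by
  rw [div_le_iff₀ hμ, add_mul, mul_assoc (α * _), div_mul_cancel₀ _ hμ.ne',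
      setIntegral_Icc_eq_add_Ioc (by positivity) (mul_le_mul_of_nonneg_right hδc hx.le)
        (F.integrableOn_one_sub_div_rpow_sub_one hx (mul_lt_of_lt_one_left hx hc1))]
  exact add_le_add (F.setIntegral_Icc_le_mul_truncatedMean hα (hδc.trans_lt hc1) hx)
    (F.setIntegral_Ioc_le_mul_tail hα hc1 hle hx (by positivity)
      (mul_le_mul_of_nonneg_right hδc hx.le))

end StieltjesFunction

theorem stmt5_general (α : ℝ) (hα : 1 ≤ α) (c : ℝ) (hc : c ∈ Set.Ioo (0:ℝ) 1)
    (Fn : StieltjesFunction ℝ)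
    (h1 : Tendsto Fn atTop (nhds 1))
    (hRV : ∀ y > (0:ℝ),
      Tendsto (fun t => (1 - Fn (t * y)) / (1 - Fn t)) atTop (nhds (y ^ (-α)))) :
    Tendsto
      (fun x => (∫ u in Set.Icc 0 (c * x), ((1 - u / x) ^ (-α) - 1) ∂Fn.measure) /
        (x⁻¹ * ∫ u in Set.Icc (0:ℝ) x, u ∂Fn.measure))
      atTop (nhds α) := by
  obtain ⟨hc0, hc1⟩ := hc
  have hα0 : 0 ≤ α := zero_le_one.trans hα
  have hle : ∀ x, Fn x ≤ 1 := fun x => Fn.mono.ge_of_tendsto h1 x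
  have hlt : ∀ x, Fn x < 1 :=
    Fn.lt_one_of_tendsto_tail_ratio hle (rpow_pos_of_pos two_pos (-α)).ne' (hRV 2 two_pos)
  have htail {δ : ℝ} (hδ : 0 < δ) := Fn.tendsto_tail_div_truncatedMean hα hlt hRV hδ
  have hK : Tendsto (fun δ => α * (1 - δ) ^ (-(α + 1))) (𝓝[>] 0) (𝓝 α) := by
    have h : ContinuousAt (fun δ : ℝ => α * (1 - δ) ^ (-(α + 1))) 0 :=
      continuousAt_const.mul ((continuousAt_const.sub continuousAt_id).rpow_const (by simp))
    simpa using h.tendsto.mono_left nhdsWithin_le_nhds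
  refine tendsto_of_squeeze_of_upper_family (upper := fun δ x => α * (1 - δ) ^ (-(α + 1))
      + α * (1 - c) ^ (-(α + 1)) * ((1 - Fn (δ * x)) / Fn.truncatedMean x))
    (by simpa using tendsto_const_nhds.sub ((htail hc0).const_mul α)) ?_ hK ?_
  · filter_upwards [eventually_gt_atTop 0, Fn.eventually_truncatedMean_pos hα hlt hRV]
      with x hx hμ
    exact Fn.sub_mul_div_truncatedMean_le_setIntegral_div hα0 hc0.le hc1 hle hx hμ
  · filter_upwards [Ioo_mem_nhdsGT hc0] with δ hδ
    refine ⟨by simpa using tendsto_const_nhds.add ((htail hδ.1).const_mul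
      (α * (1 - c) ^ (-(α + 1)))), ?_⟩
    filter_upwards [eventually_gt_atTop 0, Fn.eventually_truncatedMean_pos hα hlt hRV]
      with x hx hμ
    exact Fn.setIntegral_div_truncatedMean_le_add hα0 hδ.1.le hδ.2.le hc1 hle hx hμ

/-- Let `F_n` be a distribution function on `[0,∞)` whose survival function `1 − F_n` is
regularly varying at infinity with index `−α` for some `α ≥ 1`, and fix `c̃ ∈ (0,1)`.
With `V_α(x) = ∫₀^{c̃x} ((1 − u/x)^{-α} − 1) dF_n(u)` and `μ(x) = x^{-1} ∫₀^x u dF_n(u)`,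
one has `lim_{x→∞} V_α(x)/μ(x) = α`. -/
theorem stmt5 (α : ℝ) (hα : 1 ≤ α) (c : ℝ) (hc : c ∈ Set.Ioo (0:ℝ) 1)
    (Fn : StieltjesFunction ℝ) (h0 : ∀ x < (0:ℝ), Fn x = 0)
    (h1 : Tendsto Fn atTop (nhds 1))
    (hRV : ∀ y > (0:ℝ),
      Tendsto (fun t => (1 - Fn (t * y)) / (1 - Fn t)) atTop (nhds (y ^ (-α)))) :
    Tendsto
      (fun x => (∫ u in Set.Icc 0 (c * x), ((1 - u / x) ^ (-α) - 1) ∂Fn.measure) /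
        (x⁻¹ * ∫ u in Set.Icc (0:ℝ) x, u ∂Fn.measure))
      atTop (nhds α) :=
  stmt5_general α hα c hc Fn h1 hRV
end
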